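/- Consider the linearization of the TP-PAT data map around background coefficients (γ, σ, μ) with background solutions u_j for illuminations g_j. On ∂Ω, where u_j = g_j and δu_j = 0, the linearized data relation g_j δσ + |g_j|g_j δμ = δH_j/Γ holds. Consequently, if g₁, g₂ > 0 on ∂Ω and |g₁| ≠ |g₂| pointwise on ∂Ω, the boundary values of the perturbations are uniquely determined by two linearized data sets: δσ|_{∂Ω} = (δH₁|g₂|g₂ − δH₂|g₁|g₁)/(Γ g₁g₂(|g₂| − |g₁|)) and δμ|_{∂Ω} = (δH₂g₁ − δH₁g₂)/(Γ g₁g₂(|g₂| − |g₁|)). -/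

import Mathlib

open MeasureTheory Real Set Filter Topology
open scoped RealInnerProductSpace ENNReal NNReal

noncomputable section

abbrev Euc (n : ℕ) := EuclideanSpace ℝ (Fin n)

variable {n : ℕ}

/-- Smooth functions compactly supported in `Ω`: the test functions for `W₀^{1,2}(Ω)`. -/
def IsTestFun (Ω : Set (Euc n)) (v : Euc n → ℝ) : Prop :=
  ContDiff ℝ (⊤ : ℕ∞) v ∧ HasCompactSupport v ∧ tsupport v ⊆ Ω

/-- Membership in the Sobolev space `W^{k,2}(Ω)`. -/
def MemSob {F : Type*} [NormedAddCommGroup F] [NormedSpace ℝ F]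
    (k : ℕ) (Ω : Set (Euc n)) (u : Euc n → F) : Prop :=
  ∀ i ≤ k, MemLp (fun x => iteratedFDeriv ℝ i u x) 2 (volume.restrict Ω)

/-- The `W^{k,2}(Ω)` norm. -/
def sobNorm {F : Type*} [NormedAddCommGroup F] [NormedSpace ℝ F]
    (k : ℕ) (Ω : Set (Euc n)) (u : Euc n → F) : ℝ :=
  ∑ i ∈ Finset.range (k + 1), (∫ x in Ω, ‖iteratedFDeriv ℝ i u x‖ ^ 2) ^ ((1 : ℝ) / 2)

/-- The sup (`L^∞(Ω)`) norm. -/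
def supNorm {F : Type*} [NormedAddCommGroup F] (Ω : Set (Euc n)) (u : Euc n → F) : ℝ :=
  sSup ((fun x => ‖u x‖) '' Ω)

/-- Uniform two-sided bound `θ ≤ f ≤ Θ` on `Ω̄`. -/
def CoeffBdd (θ Θ : ℝ) (Ω : Set (Euc n)) (f : Euc n → ℝ) : Prop :=
  ∀ x ∈ closure Ω, θ ≤ f x ∧ f x ≤ Θ

/-- Weak solution of `-∇·(γ∇u) + σ u + μ|u|u = 0` in `Ω`, `u = g` on `∂Ω`. -/
def IsWeakSolution (Ω : Set (Euc n)) (γ σ μ g u : Euc n → ℝ) : Prop :=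
  MemSob 1 Ω u ∧ (∀ x ∈ frontier Ω, u x = g x) ∧
  ∀ v : Euc n → ℝ, IsTestFun Ω v →
    ∫ x in Ω, (γ x * ⟪gradient u x, gradient v x⟫ +
      σ x * u x * v x + μ x * |u x| * u x * v x) = 0

/-- `g` is the restriction to `∂Ω` of a `C³` function. -/
def IsC3BoundaryData (Ω : Set (Euc n)) (g : Euc n → ℝ) : Prop :=
  ∃ G : Euc n → ℝ, ContDiff ℝ 3 G ∧ ∀ x ∈ frontier Ω, g x = G x

/-- The TP-PAT internal datum `H = Γ(σ u + μ|u|u)`. -/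
def datum (Γ σ μ u : Euc n → ℝ) : Euc n → ℝ :=
  fun x => Γ x * (σ x * u x + μ x * |u x| * u x)

/-- The Laplacian `Δf = ∑ ∂²f/∂xᵢ²`. -/
def elap {F : Type*} [NormedAddCommGroup F] [NormedSpace ℝ F]
    (f : Euc n → F) (x : Euc n) : F :=
  ∑ i, fderiv ℝ (fun y => fderiv ℝ f y (EuclideanSpace.single i 1)) x
    (EuclideanSpace.single i 1)

/-- The divergence `∇·F = ∑ ∂Fᵢ/∂xᵢ` of a vector field. -/
def ediv (F : Euc n → Euc n) (x : Euc n) : ℝ :=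
  ∑ i, ⟪fderiv ℝ F x (EuclideanSpace.single i 1), EuclideanSpace.single i 1⟫

/-- The exterior cone condition for the domain `Ω`. -/
def ExteriorConeCondition (Ω : Set (Euc n)) : Prop :=
  ∀ x ∈ frontier Ω, ∃ ξ : Euc n, ‖ξ‖ = 1 ∧ ∃ ε > 0, ∃ δ ∈ Set.Ioo (0 : ℝ) 1,
    ∀ y, dist y x ≤ ε → δ * dist y x ≤ ⟪y - x, ξ⟫ → y ∉ Ω


/-- on `∂Ω`, where `u_j = g_j` and `δu_j = 0`, the linearized data
relation reads `g_j δσ + |g_j|g_j δμ = δH_j/Γ`; hence, with two suitable boundary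
illuminations, `δσ|∂Ω` and `δμ|∂Ω` are determined explicitly by the data.
Indices `0, 1` play the roles of `1, 2`. -/
theorem tp_pat_boundary_determination
    (n : ℕ) (hn : n = 2 ∨ n = 3)
    (Ω : Set (Euc n)) (hΩo : IsOpen Ω) (hΩb : Bornology.IsBounded Ω) (hΩne : Ω.Nonempty)
    (θ Θ : ℝ) (hθ : 0 < θ) (hθΘ : θ ≤ Θ)
    (Γ γ σ μ : Euc n → ℝ)
    (hΓ : CoeffBdd θ Θ Ω Γ)
    (hγ : CoeffBdd θ Θ Ω γ) (hσ : CoeffBdd θ Θ Ω σ) (hμ : CoeffBdd θ Θ Ω μ)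
    (g u δu δH : Fin 2 → Euc n → ℝ) (δσ δμ : Euc n → ℝ)
    -- background solutions
    (hsol : ∀ j, IsWeakSolution Ω γ σ μ (g j) (u j))
    (hub : ∀ j, ∀ x ∈ frontier Ω, u j x = g j x)
    -- the linearized data relation, valid up to the boundary
    (hlin : ∀ j, ∀ x ∈ closure Ω,
      δσ x * u j x + δμ x * |u j x| * u j x + (σ x + 2 * μ x * |u j x|) * δu j x =
        δH j x / Γ x)
    -- the boundary illumination is unchanged
    (hδu : ∀ j, ∀ x ∈ frontier Ω, δu j x = 0) :
    -- the boundary relation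
    (∀ j, ∀ x ∈ frontier Ω,
      g j x * δσ x + |g j x| * g j x * δμ x = δH j x / Γ x) ∧
    -- explicit determination of `δσ|∂Ω` and `δμ|∂Ω` from two data sets
    ((∀ x ∈ frontier Ω, 0 < g 0 x) → (∀ x ∈ frontier Ω, 0 < g 1 x) →
      (∀ x ∈ frontier Ω, |g 0 x| ≠ |g 1 x|) →
      ∀ x ∈ frontier Ω,
        δσ x = (δH 0 x * |g 1 x| * g 1 x - δH 1 x * |g 0 x| * g 0 x) /
          (Γ x * g 0 x * g 1 x * (|g 1 x| - |g 0 x|)) ∧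
        δμ x = (δH 1 x * g 0 x - δH 0 x * g 1 x) /
          (Γ x * g 0 x * g 1 x * (|g 1 x| - |g 0 x|))) := by
  have key : ∀ j, ∀ x ∈ frontier Ω,
      g j x * δσ x + |g j x| * g j x * δμ x = δH j x / Γ x := by
    intro j x hx
    have hx' : x ∈ closure Ω := frontier_subset_closure hx
    have h := hlin j x hx'
    rw [hub j x hx, hδu j x hx] at h
    linear_combination h
  refine ⟨key, ?_⟩
  intro h0 h1 hne x hx
  have hx' : x ∈ closure Ω := frontier_subset_closure hx
  have hΓx : Γ x ≠ 0 := ne_of_gt (lt_of_lt_of_le hθ (hΓ x hx').1)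
  have ha : 0 < g 0 x := h0 x hx
  have hb : 0 < g 1 x := h1 x hx
  have habs0 : |g 0 x| = g 0 x := abs_of_pos ha
  have habs1 : |g 1 x| = g 1 x := abs_of_pos hb
  have hab : g 1 x - g 0 x ≠ 0 := by
    have := hne x hx
    rw [habs0, habs1] at this
    exact sub_ne_zero.mpr (Ne.symm this)
  have e0 := key 0 x hx
  have e1 := key 1 x hx
  rw [habs0] at e0
  rw [habs1] at e1
  rw [habs0, habs1]
  have E0 : (g 0 x * δσ x + g 0 x * g 0 x * δμ x) * Γ x = δH 0 x :=
    (eq_div_iff hΓx).mp e0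
  have E1 : (g 1 x * δσ x + g 1 x * g 1 x * δμ x) * Γ x = δH 1 x :=
    (eq_div_iff hΓx).mp e1
  have hden : Γ x * g 0 x * g 1 x * (g 1 x - g 0 x) ≠ 0 :=
    mul_ne_zero (mul_ne_zero (mul_ne_zero hΓx ha.ne') hb.ne') hab
  constructor
  · rw [eq_div_iff hden]
    linear_combination (g 1 x * g 1 x) * E0 - (g 0 x * g 0 x) * E1
  · rw [eq_div_iff hden]
    linear_combination (g 0 x) * E1 - (g 1 x) * E0
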